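/- Let p, s be real numbers with 0 < p < 1 and 0 < s < 1, and let t be a real number with 0 < t < 1. Then ∫₀^∞ y^{s−1} (1+y)^{−p} (t+y)^{p−1} dy = (π / sin(πs)) · ₂F₁(1−p, 1−s; 1; 1−t). -/

import Mathlib

set_option autoImplicit false

open MeasureTheory
open scoped Real

/-- Pochhammer symbol `(a)_n = a(a+1)⋯(a+n−1)` for a real number. -/
noncomputable def pochR (a : ℝ) (n : ℕ) : ℝ := ∏ k ∈ Finset.range n, (a + k)

/-- Gauss hypergeometric series `₂F₁(a,b;c;x)` (real). -/
noncomputable def hyp2F1 (a b c x : ℝ) : ℝ :=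
  ∑' n : ℕ, (pochR a n * pochR b n) / (pochR c n * (n.factorial : ℝ)) * x ^ n

/-!
With `x = 1 - t`, the binomial series gives, for `y > 0`,
`(1 + y)^(-p) (t + y)^(p-1) = ∑ (1-p)_n / n! · xⁿ · (1 + y)^(-(n+1))`, a series of nonnegative
terms, so it may be integrated termwise against `y^(s-1)`. The substitution `y = u / (1 - u)`
turns each term into a Beta integral,
`∫₀^∞ y^(s-1) (1 + y)^(-(n+1)) dy = Γ(s) Γ(n+1-s) / n! = Γ(s) Γ(1-s) (1-s)_n / n!`,
and `Γ(s) Γ(1-s) = π / sin(πs)`.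
-/

open Set

lemma pochR_succ (a : ℝ) (n : ℕ) : pochR a (n + 1) = pochR a n * (a + n) :=
  Finset.prod_range_succ _ _

lemma pochR_nonneg {a : ℝ} (ha : 0 ≤ a) (n : ℕ) : 0 ≤ pochR a n :=
  Finset.prod_nonneg fun k _ => by positivity

lemma pochR_one (n : ℕ) : pochR 1 n = n.factorial := by
  induction n with
  | zero => simp [pochR]
  | succ n ih =>
    rw [pochR_succ, ih, Nat.factorial_succ]
    push_cast
    ring

lemma pochR_le_factorial {a : ℝ} (ha0 : 0 ≤ a) (ha1 : a ≤ 1) (n : ℕ) : pochR a n ≤ n.factorial :=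
  pochR_one n ▸ Finset.prod_le_prod (fun k _ => by positivity) fun k _ => by linarith

lemma pochR_eq_ascPochhammer_eval (a : ℝ) (n : ℕ) : pochR a n = (ascPochhammer ℝ n).eval a := by
  induction n with
  | zero => simp [pochR]
  | succ n ih => rw [pochR_succ, ih, ascPochhammer_succ_eval]

lemma Ring.choose_add_natCast_sub_one (a : ℝ) (n : ℕ) :
    Ring.choose (a + n - 1) n = pochR a n / n.factorial := by
  rw [← Ring.multichoose_eq, pochR_eq_ascPochhammer_eval, eq_div_iff (by positivity), mul_comm,
    ← nsmul_eq_mul, Ring.factorial_nsmul_multichoose_eq_ascPochhammer,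
    ← Polynomial.aeval_eq_smeval, ← ascPochhammer_map (algebraMap ℕ ℝ),
    Polynomial.eval_map_algebraMap]

lemma Real.Gamma_add_natCast_eq_pochR_mul {c : ℝ} (hc : ∀ k : ℕ, c + k ≠ 0) (n : ℕ) :
    Real.Gamma (c + n) = pochR c n * Real.Gamma c := by
  induction n with
  | zero => simp [pochR]
  | succ n ih =>
    rw [Nat.cast_succ, ← add_assoc, Real.Gamma_add_one (hc n), ih, pochR_succ]
    ring

lemma hasSum_pochR_div_factorial_mul_pow (a : ℝ) {x : ℝ} (hx : |x| < 1) :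
    HasSum (fun n : ℕ => pochR a n / n.factorial * x ^ n) ((1 - x) ^ (-a)) := by
  have hx' : x ∈ Metric.eball (0 : ℝ) 1 := by simpa [Metric.eball, edist_dist] using hx
  have := (Real.one_div_one_sub_rpow_hasFPowerSeriesOnBall_zero a).hasSum hx'
  simpa [FormalMultilinearSeries.ofScalars_apply_eq, Ring.choose_add_natCast_sub_one,
    Real.rpow_neg (show 0 ≤ 1 - x by linarith [abs_lt.mp hx]), mul_comm] using this

lemma summable_hyp2F1_one {a b x : ℝ} (ha0 : 0 ≤ a) (ha1 : a ≤ 1) (hb0 : 0 ≤ b) (hb1 : b ≤ 1)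
    (hx : |x| < 1) :
    Summable fun n : ℕ => pochR a n * pochR b n / (pochR 1 n * n.factorial) * x ^ n := by
  refine Summable.of_norm_bounded (summable_geometric_of_lt_one (abs_nonneg x) hx) fun n => ?_
  have hfac : (0 : ℝ) < pochR 1 n * n.factorial := by rw [pochR_one]; positivity
  have hcoef : pochR a n * pochR b n / (pochR 1 n * n.factorial) ≤ 1 := by
    rw [div_le_one hfac, pochR_one]
    exact mul_le_mul (pochR_le_factorial ha0 ha1 n) (pochR_le_factorial hb0 hb1 n)
      (pochR_nonneg hb0 n) (by positivity)
  rw [norm_mul, norm_pow, Real.norm_eq_abs, Real.norm_eq_abs,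
    abs_of_nonneg (div_nonneg (mul_nonneg (pochR_nonneg ha0 n) (pochR_nonneg hb0 n)) hfac.le)]
  exact mul_le_of_le_one_left (by positivity) hcoef

lemma eqOn_cpow_mul_one_sub_cpow (u v : ℝ) :
    EqOn (fun z : ℝ => (z : ℂ) ^ ((u : ℂ) - 1) * (1 - (z : ℂ)) ^ ((v : ℂ) - 1))
      (fun z => ((z ^ (u - 1) * (1 - z) ^ (v - 1) : ℝ) : ℂ)) (Icc 0 1) := fun z hz => by
  dsimp only
  rw [Complex.ofReal_mul, Complex.ofReal_cpow hz.1, Complex.ofReal_cpow (by linarith [hz.2])]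
  push_cast
  rfl

lemma integrableOn_Ioo_rpow_mul_one_sub_rpow {u v : ℝ} (hu : 0 < u) (hv : 0 < v) :
    IntegrableOn (fun z : ℝ => z ^ (u - 1) * (1 - z) ^ (v - 1)) (Ioo 0 1) := by
  have hint := (Complex.betaIntegral_convergent (u := u) (v := v) (by simpa using hu)
    (by simpa using hv)).1.mono_set Ioo_subset_Ioc_self
  have hre := (hint.congr_fun ((eqOn_cpow_mul_one_sub_cpow u v).mono Ioo_subset_Icc_self)
    measurableSet_Ioo).re
  simpa [IntegrableOn] using hre

lemma integral_Ioo_rpow_mul_one_sub_rpow {u v : ℝ} (hu : 0 < u) (hv : 0 < v) :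
    ∫ z in Ioo (0 : ℝ) 1, z ^ (u - 1) * (1 - z) ^ (v - 1)
      = Real.Gamma u * Real.Gamma v / Real.Gamma (u + v) := by
  have hbeta := Complex.betaIntegral_eq_Gamma_mul_div (u : ℂ) (v : ℂ)
    (by simpa using hu) (by simpa using hv)
  rw [Complex.betaIntegral, intervalIntegral.integral_congr
      ((eqOn_cpow_mul_one_sub_cpow u v).mono (by simp [uIcc_of_le])),
    intervalIntegral.integral_ofReal, intervalIntegral.integral_of_le zero_le_one,
    integral_Ioc_eq_integral_Ioo, ← Complex.ofReal_add, Complex.Gamma_ofReal,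
    Complex.Gamma_ofReal, Complex.Gamma_ofReal] at hbeta
  exact_mod_cast hbeta

lemma image_div_one_sub_Ioo : (fun u : ℝ => u / (1 - u)) '' Ioo 0 1 = Ioi 0 := by
  ext y
  constructor
  · rintro ⟨u, hu, rfl⟩
    exact div_pos hu.1 (sub_pos.mpr hu.2)
  · intro hy
    have hy : 0 < y := hy
    refine ⟨y / (1 + y), ⟨by positivity, (div_lt_one (by positivity)).mpr (by linarith)⟩, ?_⟩
    field_simp
    ring

lemma hasDerivAt_div_one_sub {u : ℝ} (hu : u ≠ 1) :
    HasDerivAt (fun w : ℝ => w / (1 - w)) ((1 - u) ^ 2)⁻¹ u :=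
  ((hasDerivAt_id' u).fun_div ((hasDerivAt_id' u).const_sub 1)
    (sub_ne_zero.mpr hu.symm)).congr_deriv (by ring)

lemma injOn_div_one_sub : InjOn (fun u : ℝ => u / (1 - u)) (Iio 1) := by
  intro a (ha : a < 1) b (hb : b < 1) hab
  have ha' : 1 - a ≠ 0 := by linarith
  have hb' : 1 - b ≠ 0 := by linarith
  field_simp at hab
  linarith

lemma abs_inv_sq_smul_rpow_div_one_sub {u : ℝ} (hu : u ∈ Ioo (0 : ℝ) 1) (b d : ℝ) :
    |((1 - u) ^ 2)⁻¹| • ((u / (1 - u)) ^ (b - 1) * (1 + u / (1 - u)) ^ (-d))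
      = u ^ (b - 1) * (1 - u) ^ (d - b - 1) := by
  have hu1 : 0 < 1 - u := sub_pos.mpr hu.2
  have hsum : 1 + u / (1 - u) = (1 - u)⁻¹ := by field_simp; ring
  rw [smul_eq_mul, abs_of_pos (by positivity), hsum, Real.div_rpow hu.1.le hu1.le,
    Real.inv_rpow hu1.le, Real.rpow_neg hu1.le, inv_inv,
    show d - b - 1 = d - (b - 1) - 2 by ring, Real.rpow_sub hu1 (d - (b - 1)) 2,
    Real.rpow_sub hu1 d (b - 1), Real.rpow_two]
  field_simp

lemma integrableOn_Ioi_rpow_mul_one_add_rpow_neg {b d : ℝ} (hb : 0 < b) (hbd : b < d) :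
    IntegrableOn (fun y : ℝ => y ^ (b - 1) * (1 + y) ^ (-d)) (Ioi 0) := by
  rw [← image_div_one_sub_Ioo,
    integrableOn_image_iff_integrableOn_abs_deriv_smul measurableSet_Ioo
      (fun u hu => (hasDerivAt_div_one_sub hu.2.ne).hasDerivWithinAt)
      (injOn_div_one_sub.mono Ioo_subset_Iio_self)]
  exact (integrableOn_Ioo_rpow_mul_one_sub_rpow hb (sub_pos.mpr hbd)).congr_fun
    (fun u hu => (abs_inv_sq_smul_rpow_div_one_sub hu b d).symm) measurableSet_Ioo

lemma integral_Ioi_rpow_mul_one_add_rpow_neg {b d : ℝ} (hb : 0 < b) (hbd : b < d) :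
    ∫ y in Ioi (0 : ℝ), y ^ (b - 1) * (1 + y) ^ (-d)
      = Real.Gamma b * Real.Gamma (d - b) / Real.Gamma d := by
  rw [← image_div_one_sub_Ioo,
    integral_image_eq_integral_abs_deriv_smul measurableSet_Ioo
      (fun u hu => (hasDerivAt_div_one_sub hu.2.ne).hasDerivWithinAt)
      (injOn_div_one_sub.mono Ioo_subset_Iio_self),
    setIntegral_congr_fun measurableSet_Ioo (fun u hu => abs_inv_sq_smul_rpow_div_one_sub hu b d),
    integral_Ioo_rpow_mul_one_sub_rpow hb (sub_pos.mpr hbd), add_sub_cancel]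

lemma integral_Ioi_rpow_mul_one_add_rpow_neg_natCast_add_one {s : ℝ} (hs0 : 0 < s) (hs1 : s < 1)
    (n : ℕ) :
    ∫ y in Ioi (0 : ℝ), y ^ (s - 1) * (1 + y) ^ (-((n : ℝ) + 1))
      = π / Real.sin (π * s) * (pochR (1 - s) n / n.factorial) := by
  have hpos : ∀ k : ℕ, 1 - s + k ≠ 0 := fun k => by linarith [k.cast_nonneg (α := ℝ)]
  rw [integral_Ioi_rpow_mul_one_add_rpow_neg hs0 (by linarith [n.cast_nonneg (α := ℝ)]),
    show (n : ℝ) + 1 - s = 1 - s + n by ring, Real.Gamma_add_natCast_eq_pochR_mul hpos,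
    Real.Gamma_nat_eq_factorial, ← Real.Gamma_mul_Gamma_one_sub]
  ring

lemma hasSum_integral_of_nonneg_of_hasSum {α : Type*} [MeasurableSpace α] {μ : Measure α}
    {f : ℕ → α → ℝ} {F : α → ℝ} (hf_nonneg : ∀ n, 0 ≤ᵐ[μ] f n) (hf_int : ∀ n, Integrable (f n) μ)
    (hsum : Summable fun n => ∫ x, f n x ∂μ) (hF : ∀ᵐ x ∂μ, HasSum (fun n => f n x) (F x)) :
    HasSum (fun n => ∫ x, f n x ∂μ) (∫ x, F x ∂μ) := by
  have hnorm : ∀ n, ∫ x, ‖f n x‖ ∂μ = ∫ x, f n x ∂μ := fun n =>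
    integral_congr_ae ((hf_nonneg n).mono fun x hx => Real.norm_of_nonneg hx)
  rw [integral_congr_ae (hF.mono fun x hx => hx.tsum_eq.symm),
    ← integral_tsum_of_summable_integral_norm hf_int (by simpa only [hnorm] using hsum)]
  exact hsum.hasSum

lemma hasSum_pochR_mul_rpow_neg (a : ℝ) {w x : ℝ} (hx : |x| < w) :
    HasSum (fun n : ℕ => pochR a n / n.factorial * x ^ n * w ^ (-((n : ℝ) + 1)))
      (w ^ (a - 1) * (w - x) ^ (-a)) := by
  have hw : 0 < w := (abs_nonneg x).trans_lt hx
  have hxw : |x / w| < 1 := by rwa [abs_div, abs_of_pos hw, div_lt_one hw]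
  have hterm : ∀ n : ℕ, pochR a n / n.factorial * x ^ n * w ^ (-((n : ℝ) + 1))
      = w⁻¹ * (pochR a n / n.factorial * (x / w) ^ n) := fun n => by
    rw [Real.rpow_neg hw.le, Real.rpow_add_one hw.ne', Real.rpow_natCast, div_pow]
    field_simp
  have hval : w ^ (a - 1) * (w - x) ^ (-a) = w⁻¹ * (1 - x / w) ^ (-a) := by
    rw [show w - x = w * (1 - x / w) by field_simp,
      Real.mul_rpow hw.le (by linarith [(abs_lt.mp hxw).2]), Real.rpow_sub_one hw.ne',
      Real.rpow_neg hw.le]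
    field_simp
  simpa only [hterm, hval] using (hasSum_pochR_div_factorial_mul_pow a hxw).mul_left w⁻¹

theorem stmt7 (p s t : ℝ) (hp0 : 0 < p) (hp1 : p < 1) (hs0 : 0 < s) (hs1 : s < 1)
    (ht0 : 0 < t) (ht1 : t < 1) :
    ∫ y in Set.Ioi (0:ℝ), y ^ (s - 1) * (1 + y) ^ (-p) * (t + y) ^ (p - 1)
      = π / Real.sin (π * s) * hyp2F1 (1 - p) (1 - s) 1 (1 - t) := by
  set a := 1 - p
  set x := 1 - t
  have hxabs : |x| < 1 := abs_lt.mpr ⟨by linarith, by linarith⟩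
  have hsummable := summable_hyp2F1_one (a := a) (b := 1 - s) (by linarith) (by linarith)
    (by linarith) (by linarith) hxabs
  let f : ℕ → ℝ → ℝ := fun n y =>
    pochR a n / n.factorial * x ^ n * (y ^ (s - 1) * (1 + y) ^ (-((n : ℝ) + 1)))
  have hf_integral : ∀ n : ℕ, ∫ y in Ioi (0 : ℝ), f n y = π / Real.sin (π * s) *
      (pochR a n * pochR (1 - s) n / (pochR 1 n * n.factorial) * x ^ n) := fun n => by
    rw [integral_const_mul, integral_Ioi_rpow_mul_one_add_rpow_neg_natCast_add_one hs0 hs1,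
      pochR_one]
    ring
  have hf_nonneg : ∀ n, 0 ≤ᵐ[volume.restrict (Ioi 0)] f n := fun n =>
    (ae_restrict_iff' measurableSet_Ioi).mpr <| ae_of_all _ fun y (hy : 0 < y) => by
      have hpoch := pochR_nonneg (show 0 ≤ a by linarith) n
      have hx0 : 0 ≤ x := by linarith
      positivity
  have hexpand : ∀ᵐ y ∂volume.restrict (Ioi 0),
      HasSum (fun n => f n y) (y ^ (s - 1) * (1 + y) ^ (-p) * (t + y) ^ (p - 1)) :=
    (ae_restrict_iff' measurableSet_Ioi).mpr <| ae_of_all _ fun y (hy : 0 < y) => by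
      have h := (hasSum_pochR_mul_rpow_neg a (w := 1 + y) (x := x)
        (by linarith [abs_lt.mp hxabs])).mul_left (y ^ (s - 1))
      rw [show a - 1 = -p by ring, show 1 + y - x = t + y by ring, show -a = p - 1 by ring,
        ← mul_assoc] at h
      exact h.congr_fun fun n => by ring
  have hsum := hasSum_integral_of_nonneg_of_hasSum hf_nonneg
    (fun n => (integrableOn_Ioi_rpow_mul_one_add_rpow_neg hs0 (by linarith)).const_mul _)
    ((hsummable.mul_left _).congr fun n => (hf_integral n).symm) hexpand
  simp only [hf_integral] at hsum
  exact hsum.unique (hsummable.hasSum.mul_left _)
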